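/- arXiv:1712.08383 — 5 statements merged into one kernel-verified Lean document; each statement's English description precedes it below -/
import Mathlib

section
/- Let A, B be complex k×k matrices. If [A,B] = 0 and [A,A*] + [B,B*] is negative semidefinite, then [A,A*] = 0 and [B,B*] = 0 (i.e., A and B are both normal). -/
/-!
The trace of `N = [A, A*] + [B, B*]` vanishes, so `N ≤ 0` forces `N = 0`, i.e. `[B, B*] = -[A, A*]`.
For commuting `A` and `B`, cyclicity of the trace gives `tr ([A, B*] [A, B*]*) = tr ([A, A*] [B, B*])`.
Hence `‖[A, A*]‖²_F = tr ([A, A*]²) = -tr ([A, A*] [B, B*]) = -‖[A, B*]‖²_F ≤ 0`,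
so `[A, A*] = 0`, and then `[B, B*] = 0` as well.
-/

open scoped Matrix ComplexOrder

section

open Matrix

variable {n R : Type*} [Fintype n]

theorem Commute.trace_lie_conjTranspose_mul_conjTranspose [CommRing R] [StarRing R]
    {A B : Matrix n n R} (h : Commute A B) :
    trace (⁅A, Bᴴ⁆ * ⁅A, Bᴴ⁆ᴴ) = trace (⁅A, Aᴴ⁆ * ⁅B, Bᴴ⁆) := by
  have hBA (X : Matrix n n R) : B * (A * X) = A * (B * X) := by
    rw [← Matrix.mul_assoc, ← h.eq, Matrix.mul_assoc]
  have e₁ : trace (A * (Bᴴ * (B * Aᴴ))) = trace (Aᴴ * (A * (Bᴴ * B))) := by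
    rw [trace_mul_comm Aᴴ]; simp only [Matrix.mul_assoc]
  have e₂ : trace (A * (Bᴴ * (Aᴴ * B))) = trace (Aᴴ * (A * (B * Bᴴ))) := by
    rw [trace_mul_comm Aᴴ, ← Matrix.mul_assoc, ← Matrix.mul_assoc, trace_mul_comm _ B]
    simp only [Matrix.mul_assoc, hBA]
  have e₃ : trace (Bᴴ * (A * (B * Aᴴ))) = trace (A * (Aᴴ * (Bᴴ * B))) := by
    rw [← hBA, ← Matrix.mul_assoc A, trace_mul_comm (A * Aᴴ)]; simp only [Matrix.mul_assoc]
  have e₄ : trace (Bᴴ * (A * (Aᴴ * B))) = trace (A * (Aᴴ * (B * Bᴴ))) := by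
    rw [trace_mul_comm Bᴴ]; simp only [Matrix.mul_assoc]
  simp only [Ring.lie_def, conjTranspose_sub, conjTranspose_mul, conjTranspose_conjTranspose,
    sub_mul, mul_sub, trace_sub, Matrix.mul_assoc, e₁, e₂, e₃, e₄]
  ring

theorem Commute.lie_conjTranspose_self_eq_zero_of_add_eq_zero [CommRing R] [PartialOrder R]
    [StarRing R] [StarOrderedRing R] [NoZeroDivisors R] {A B : Matrix n n R} (h : Commute A B)
    (hsum : ⁅A, Aᴴ⁆ + ⁅B, Bᴴ⁆ = 0) : ⁅A, Aᴴ⁆ = 0 := by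
  have hX : ⁅A, Aᴴ⁆ᴴ = ⁅A, Aᴴ⁆ := by
    simp only [Ring.lie_def, conjTranspose_sub, conjTranspose_mul, conjTranspose_conjTranspose]
  have hY : ⁅B, Bᴴ⁆ = -⁅A, Aᴴ⁆ := eq_neg_of_add_eq_zero_right hsum
  rw [← trace_mul_conjTranspose_self_eq_zero_iff]
  refine le_antisymm ?_ (posSemidef_self_mul_conjTranspose _).trace_nonneg
  calc trace (⁅A, Aᴴ⁆ * ⁅A, Aᴴ⁆ᴴ) = -trace (⁅A, Aᴴ⁆ * ⁅B, Bᴴ⁆) := by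
        rw [hX, hY, Matrix.mul_neg, trace_neg, neg_neg]
    _ = -trace (⁅A, Bᴴ⁆ * ⁅A, Bᴴ⁆ᴴ) := by rw [h.trace_lie_conjTranspose_mul_conjTranspose]
    _ ≤ 0 := neg_nonpos.mpr (posSemidef_self_mul_conjTranspose _).trace_nonneg

end

/-- If `[A,B] = 0` and `[A,A*] + [B,B*]` is negative semidefinite, then
`[A,A*] = 0` and `[B,B*] = 0`, i.e. `A` and `B` are normal. -/
theorem commuting_with_neg_semidef_bracket_sum_normal
    {k : ℕ} (A B : Matrix (Fin k) (Fin k) ℂ)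
    (hAB : A * B = B * A)
    (hneg : (-((A * Aᴴ - Aᴴ * A) + (B * Bᴴ - Bᴴ * B))).PosSemidef) :
    A * Aᴴ = Aᴴ * A ∧ B * Bᴴ = Bᴴ * B := by
  simp only [← Ring.lie_def] at hneg
  have hsum : ⁅A, Aᴴ⁆ + ⁅B, Bᴴ⁆ = 0 :=
    neg_eq_zero.mp <| hneg.trace_eq_zero_iff.mp <| by simp
  have hcomm : Commute A B := hAB
  rw [← sub_eq_zero, ← sub_eq_zero (a := B * Bᴴ), ← Ring.lie_def, ← Ring.lie_def]
  exact ⟨hcomm.lie_conjTranspose_self_eq_zero_of_add_eq_zero hsum,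
    hcomm.symm.lie_conjTranspose_self_eq_zero_of_add_eq_zero (by rwa [add_comm])⟩
end

section
/- Let A, B be complex k×k matrices and v, w ∈ ℂᵏ with wv* = [A,B]. Let V₁ be the smallest subspace of ℂᵏ containing w and invariant under both A and B. If additionally ⟨v,w⟩ = 0, then v is orthogonal to V₁. -/
/-! Write `⟪C⟫ = v* C w` for a word `C` in `A` and `B`; we show `⟪C⟫ = 0` by induction on the
length of `C`. Replacing a factor `AB` of `C = P AB Q` by `BA` changes `⟪C⟫` by
`v* P w v* Q w = ⟪P⟫⟪Q⟫`, which vanishes inductively, so `⟪C⟫` only depends on how often each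
letter occurs in `C`. Now `⟪C⟫ = tr (C [A,B]) = tr (CAB) - tr (ACB)`, and moving `A` through `C`
letter by letter picks up `-tr (P wv* Q B) = -⟪QBP⟫ = -⟪C⟫` at every occurrence `C = PBQ` of `B`.
Hence `(1 + #B) ⟪C⟫ = 0`. -/

open Matrix

theorem List.Perm.apply_eq_apply_of_swap_invariant {α β : Type*} {f : List α → β} {m : ℕ}
    (hf : ∀ p q x y, (p ++ x :: y :: q).length = m → f (p ++ x :: y :: q) = f (p ++ y :: x :: q))
    {l l' : List α} (h : l.Perm l') (hl : l.length = m) : f l = f l' := by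
  suffices ∀ p, (p ++ l).length = m → f (p ++ l) = f (p ++ l') from this [] hl
  clear hl
  induction h with
  | nil => exact fun _ _ => rfl
  | cons x _ ih => exact fun p hp => by simpa using ih (p ++ [x]) (by simpa using hp)
  | swap x y t => exact fun p hp => hf p t y x hp
  | trans h₁ _ ih₁ ih₂ =>
    exact fun p hp => (ih₁ p hp).trans (ih₂ p (by simpa [← h₁.length_eq] using hp))

section

variable {R n : Type*} [CommSemiring R] [Fintype n]

lemma dotProduct_mulVec_eq_trace_mul_vecMulVec (M : Matrix n n R) (u w : n → R) :
    u ⬝ᵥ (M *ᵥ w) = trace (M * vecMulVec w u) := by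
  rw [mul_vecMulVec, trace_vecMulVec, dotProduct_comm]

lemma dotProduct_mul_vecMulVec_mul_mulVec (P Q : Matrix n n R) (u w : n → R) :
    u ⬝ᵥ ((P * vecMulVec w u * Q) *ᵥ w) = (u ⬝ᵥ (P *ᵥ w)) * (u ⬝ᵥ (Q *ᵥ w)) := by
  rw [← mulVec_mulVec, ← mulVec_mulVec, vecMulVec_mulVec, mulVec_smul, dotProduct_smul,
    MulOpposite.smul_eq_mul_unop, MulOpposite.unop_op, mul_comm]

end

section

variable {R n : Type*} [Semiring R] [Fintype n] [DecidableEq n] {A B : Matrix n n R}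

variable (A B) in
def word (l : List Bool) : Matrix n n R :=
  (l.map (cond · A B)).prod

@[simp] lemma word_nil : word A B [] = 1 := rfl

@[simp] lemma word_cons (x : Bool) (l : List Bool) :
    word A B (x :: l) = cond x A B * word A B l := List.prod_cons

@[simp] lemma word_append (l₁ l₂ : List Bool) :
    word A B (l₁ ++ l₂) = word A B l₁ * word A B l₂ := by
  simp [word]

lemma exists_word_eq_prod {l : List (Matrix n n R)} (hl : ∀ M ∈ l, M = A ∨ M = B) :
    ∃ c, word A B c = l.prod := by
  induction l with
  | nil => exact ⟨[], rfl⟩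
  | cons M l ih =>
    obtain ⟨c, hc⟩ := ih fun N hN => hl N (List.mem_cons_of_mem M hN)
    rcases hl M List.mem_cons_self with rfl | rfl
    exacts [⟨true :: c, by simp [hc]⟩, ⟨false :: c, by simp [hc]⟩]

end

section

variable {R n : Type*} [CommRing R] [Fintype n] [DecidableEq n] {A B : Matrix n n R}
  {u w : n → R}

lemma dotProduct_word_mulVec_swap (houter : vecMulVec w u = A * B - B * A) (p q : List Bool) :
    u ⬝ᵥ (word A B (p ++ true :: false :: q) *ᵥ w) =
      u ⬝ᵥ (word A B (p ++ false :: true :: q) *ᵥ w) +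
        u ⬝ᵥ (word A B p *ᵥ w) * u ⬝ᵥ (word A B q *ᵥ w) := by
  rw [← dotProduct_mul_vecMulVec_mul_mulVec, ← dotProduct_add, ← add_mulVec, houter]
  congr 2
  simp only [word_append, word_cons, cond_true, cond_false]
  noncomm_ring

lemma dotProduct_word_mulVec_eq_of_perm (houter : vecMulVec w u = A * B - B * A) {m : ℕ}
    (hshort : ∀ l : List Bool, l.length < m → u ⬝ᵥ (word A B l *ᵥ w) = 0)
    {l l' : List Bool} (h : l.Perm l') (hl : l.length = m) :
    u ⬝ᵥ (word A B l *ᵥ w) = u ⬝ᵥ (word A B l' *ᵥ w) := by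
  refine h.apply_eq_apply_of_swap_invariant (f := fun l => u ⬝ᵥ (word A B l *ᵥ w))
    (fun p q x y hpq => ?_) hl
  have hp : u ⬝ᵥ (word A B p *ᵥ w) = 0 := hshort p (by simp at hpq; omega)
  cases x <;> cases y <;> simp only [dotProduct_word_mulVec_swap houter, hp, zero_mul, add_zero]

lemma trace_word_mul_mul_sub (houter : vecMulVec w u = A * B - B * A) {C : List Bool}
    (hC : ∀ l : List Bool, l.Perm C → u ⬝ᵥ (word A B l *ᵥ w) = u ⬝ᵥ (word A B C *ᵥ w))
    (s t : List Bool) (hst : (t ++ s).Perm C) :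
    trace (word A B t * word A B s * A * B) - trace (word A B t * A * word A B s * B) =
      -(s.count false) * u ⬝ᵥ (word A B C *ᵥ w) := by
  induction s generalizing t with
  | nil => simp [Matrix.mul_assoc]
  | cons x s ih =>
    have ih' := ih (t ++ [x]) (by rwa [List.append_assoc, List.singleton_append])
    set T := word A B t
    set S := word A B s
    cases x <;> simp only [word_append, word_cons, word_nil, Matrix.mul_one, cond_true,
      cond_false] at ih' ⊢
    · have hrot : trace (T * vecMulVec w u * S * B) = u ⬝ᵥ (word A B C *ᵥ w) := by
        rw [← hC (s ++ false :: t) (List.perm_append_comm.trans (List.perm_middle.symm.trans hst)),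
          dotProduct_mulVec_eq_trace_mul_vecMulVec, word_append, word_cons, cond_false,
          ← Matrix.mul_assoc]
        calc trace (T * vecMulVec w u * S * B) = trace (T * (vecMulVec w u * (S * B))) := by
              simp only [Matrix.mul_assoc]
          _ = _ := by rw [trace_mul_comm, Matrix.mul_assoc, trace_mul_comm]
      have key : T * (B * S) * A * B - T * A * (B * S) * B =
          (T * B * S * A * B - T * B * A * S * B) - T * vecMulVec w u * S * B := by
        rw [houter]; noncomm_ring
      rw [← trace_sub, key, trace_sub, trace_sub, ih', hrot, List.count_cons_self]
      push_cast
      ring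
    · have key : T * (A * S) * A * B - T * A * (A * S) * B =
          T * A * S * A * B - T * A * A * S * B := by
        noncomm_ring
      rw [← trace_sub, key, trace_sub, ih', List.count_cons_of_ne (by decide : true ≠ false)]

lemma dotProduct_word_mulVec_eq_neg_count_mul (houter : vecMulVec w u = A * B - B * A)
    {C : List Bool}
    (hC : ∀ l : List Bool, l.Perm C → u ⬝ᵥ (word A B l *ᵥ w) = u ⬝ᵥ (word A B C *ᵥ w)) :
    u ⬝ᵥ (word A B C *ᵥ w) = -(C.count false) * u ⬝ᵥ (word A B C *ᵥ w) := by
  have h := trace_word_mul_mul_sub houter hC C [] (by simp)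
  rw [word_nil, Matrix.one_mul, Matrix.one_mul, ← trace_mul_cycle (word A B C) B A] at h
  rw [← h, dotProduct_mulVec_eq_trace_mul_vecMulVec, houter, ← trace_sub]
  noncomm_ring

theorem dotProduct_word_mulVec_eq_zero [NoZeroDivisors R] [CharZero R]
    (houter : vecMulVec w u = A * B - B * A) (C : List Bool) :
    u ⬝ᵥ (word A B C *ᵥ w) = 0 := by
  induction hm : C.length using Nat.strong_induction_on generalizing C with
  | _ m ih =>
    have hperm : ∀ l : List Bool, l.Perm C →
        u ⬝ᵥ (word A B l *ᵥ w) = u ⬝ᵥ (word A B C *ᵥ w) := fun l hl =>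
      dotProduct_word_mulVec_eq_of_perm houter (fun l' hl' => ih _ hl' l' rfl) hl
        (hl.length_eq.trans hm)
    have h := dotProduct_word_mulVec_eq_neg_count_mul houter hperm
    have hc : ((C.count false : R) + 1) * u ⬝ᵥ (word A B C *ᵥ w) = 0 := by
      linear_combination h
    exact (mul_eq_zero.mp hc).resolve_left (Nat.cast_add_one_ne_zero _)

end

theorem orthogonal_to_smallest_invariant_subspace_general
    {k : ℕ} (A B : Matrix (Fin k) (Fin k) ℂ) (v w : Fin k → ℂ)
    (houter : Matrix.vecMulVec w (star v) = A * B - B * A) :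
    ∀ x ∈ Submodule.span ℂ {x : Fin k → ℂ |
        ∃ l : List (Matrix (Fin k) (Fin k) ℂ),
          (∀ M ∈ l, M = A ∨ M = B) ∧ x = l.prod *ᵥ w},
      star v ⬝ᵥ x = 0 := by
  intro x hx
  induction hx using Submodule.span_induction with
  | mem x hx =>
    obtain ⟨l, hl, rfl⟩ := hx
    obtain ⟨c, hc⟩ := exists_word_eq_prod hl
    rw [← hc]
    exact dotProduct_word_mulVec_eq_zero houter c
  | zero => exact dotProduct_zero _
  | add x y _ _ hx hy => rw [dotProduct_add, hx, hy, add_zero]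
  | smul a x _ hx => rw [dotProduct_smul, hx, smul_zero]

/-- If `w v* = [A,B]` and `⟨v,w⟩ = 0`, then `v` is orthogonal to the smallest
subspace `V₁` of `ℂᵏ` containing `w` and invariant under `A` and `B`, namely the
span of all vectors `C w` where `C` ranges over words in `A` and `B`. -/
theorem orthogonal_to_smallest_invariant_subspace
    {k : ℕ} (A B : Matrix (Fin k) (Fin k) ℂ) (v w : Fin k → ℂ)
    (houter : Matrix.vecMulVec w (star v) = A * B - B * A)
    (hvw : star v ⬝ᵥ w = 0) :
    ∀ x ∈ Submodule.span ℂ {x : Fin k → ℂ |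
        ∃ l : List (Matrix (Fin k) (Fin k) ℂ),
          (∀ M ∈ l, M = A ∨ M = B) ∧ x = l.prod *ᵥ w},
      star v ⬝ᵥ x = 0 :=
  orthogonal_to_smallest_invariant_subspace_general A B v w houter
end

section
/- Let A, B be complex k×k matrices and v, w ∈ ℂᵏ satisfying vv* − ww* = [A,A*] + [B,B*] and wv* = [A,B]. Then v = 0 and w = 0. -/
/-!
Induction on length shows that `w v* = [A, B]` forces `v* W w = 0` for every word `W` in `A`
and `B`: modulo shorter words `A` and `B` commute inside `v* W w`, so `W` may be taken to be
`A^a B^b`, and then the trace of `A^a B^b [A, B]` gives `(1 + b) v* A^a B^b w = 0`. Hence the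
smallest `A, B`-invariant subspace `U` containing `w` is orthogonal to `v`. For the orthogonal
projection `P` onto `U`, invariance gives `tr ([M, M*] P) = ‖PM - MP‖² ≥ 0` for `M = A, B`, so
the trace of the real equation against `P` reads `-‖w‖² ≥ 0`. Thus `w = 0`, and then `v = 0`.
-/

open scoped Matrix ComplexOrder

open Matrix

theorem pow_mul_sub_mul_pow {R : Type*} [Ring R] (a b : R) (n : ℕ) :
    b ^ n * a - a * b ^ n = ∑ i ∈ Finset.range n, b ^ i * (b * a - a * b) * b ^ (n - 1 - i) := by
  have hterm : ∀ i ∈ Finset.range n, b ^ (i + 1) * a * b ^ (n - (i + 1)) - b ^ i * a * b ^ (n - i)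
      = b ^ i * (b * a - a * b) * b ^ (n - 1 - i) := by
    intro i hi
    obtain ⟨j, rfl⟩ := Nat.exists_eq_add_of_lt (Finset.mem_range.mp hi)
    rw [show i + j + 1 - (i + 1) = j by omega, show i + j + 1 - i = j + 1 by omega,
      show i + j + 1 - 1 - i = j by omega, pow_succ, pow_succ']
    noncomm_ring
  rw [← Finset.sum_congr rfl hterm, Finset.sum_range_sub (fun i => b ^ i * a * b ^ (n - i))]
  simp

theorem Matrix.trace_vecMulVec_mul {K m n : Type*} [CommRing K] [Fintype m] [Fintype n]
    (w : m → K) (u : n → K) (Y : Matrix n m K) :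
    trace (vecMulVec w u * Y) = u ⬝ᵥ (Y *ᵥ w) := by
  rw [vecMulVec_mul, trace_vecMulVec, dotProduct_comm, dotProduct_mulVec]

namespace ADHM

variable {n : Type*} [Fintype n]

section Words

variable {K : Type*} [CommRing K] [DecidableEq n] (A B : Matrix n n K)

def evalWord (l : List Bool) : Matrix n n K :=
  (l.map fun b => bif b then A else B).prod

@[simp] lemma evalWord_nil : evalWord A B [] = 1 := rfl

@[simp] lemma evalWord_cons (b : Bool) (l : List Bool) :
    evalWord A B (b :: l) = (bif b then A else B) * evalWord A B l := by
  simp [evalWord]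

@[simp] lemma evalWord_append (l₁ l₂ : List Bool) :
    evalWord A B (l₁ ++ l₂) = evalWord A B l₁ * evalWord A B l₂ := by
  simp [evalWord]

@[simp] lemma evalWord_replicate (m : ℕ) (b : Bool) :
    evalWord A B (List.replicate m b) = (bif b then A else B) ^ m := by
  simp [evalWord, List.map_replicate]

variable (u w : n → K)

def wordCoeff (l : List Bool) : K := u ⬝ᵥ (evalWord A B l *ᵥ w)

variable {A B u w}

lemma wordCoeff_swap (hAB : vecMulVec w u = A * B - B * A) (p q : List Bool) :
    wordCoeff A B u w (p ++ false :: true :: q)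
      = wordCoeff A B u w (p ++ true :: false :: q)
        - wordCoeff A B u w p * wordCoeff A B u w q := by
  have hBA : B * A = A * B - vecMulVec w u := by rw [hAB, sub_sub_cancel]
  have hsplit : (evalWord A B p * vecMulVec w u * evalWord A B q) *ᵥ w
      = (u ⬝ᵥ evalWord A B q *ᵥ w) • (evalWord A B p *ᵥ w) := by
    rw [mul_vecMulVec, vecMulVec_mul, vecMulVec_mulVec, ← dotProduct_mulVec, op_smul_eq_smul]
  simp only [wordCoeff, evalWord_append, evalWord_cons, cond_false, cond_true, ← mul_assoc, hBA]
  rw [mul_sub, sub_mul, sub_mulVec, dotProduct_sub, hsplit, dotProduct_smul, smul_eq_mul, mul_comm,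
    mul_assoc _ A B]

lemma wordCoeff_append_perm (hAB : vecMulVec w u = A * B - B * A) {N : ℕ}
    (hshort : ∀ l : List Bool, l.length < N → wordCoeff A B u w l = 0)
    {l₁ l₂ : List Bool} (hperm : l₁.Perm l₂) (p : List Bool)
    (hlen : p.length + l₁.length ≤ N) :
    wordCoeff A B u w (p ++ l₁) = wordCoeff A B u w (p ++ l₂) := by
  induction hperm generalizing p with
  | nil => rfl
  | cons x _ ih =>
    simpa using ih (p ++ [x]) (by simp at hlen ⊢; omega)
  | swap x y l =>
    have hp : wordCoeff A B u w p = 0 := hshort p (by simp at hlen; omega)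
    cases x <;> cases y <;> simp [wordCoeff_swap hAB, hp]
  | trans h₁₂ _ ih₁₂ ih₂₃ =>
    exact (ih₁₂ p hlen).trans (ih₂₃ p (h₁₂.length_eq ▸ hlen))

lemma dotProduct_pow_mul_pow_mulVec_eq_zero [IsDomain K] [CharZero K]
    (hAB : vecMulVec w u = A * B - B * A) {a b : ℕ}
    (hshort : ∀ l : List Bool, l.length < a + b → wordCoeff A B u w l = 0) :
    u ⬝ᵥ ((A ^ a * B ^ b) *ᵥ w) = 0 := by
  set c := u ⬝ᵥ ((A ^ a * B ^ b) *ᵥ w)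
  have hrotate : ∀ i ∈ Finset.range b,
      u ⬝ᵥ ((B ^ (b - 1 - i) * B * (A ^ a * B ^ i)) *ᵥ w) = c := by
    intro i hi
    have hi : i < b := Finset.mem_range.mp hi
    have hperm :
        (List.replicate (b - i) false ++ List.replicate a true ++ List.replicate i false).Perm
          (List.replicate a true ++ List.replicate b false) :=
      (List.perm_replicate_append_replicate (by decide : true ≠ false)).2
        ⟨by simp [List.count_replicate], by simp [List.count_replicate]; omega,
          fun x _ => by cases x <;> simp⟩
    rw [← pow_succ, show b - 1 - i + 1 = b - i by omega]
    simpa [wordCoeff, mul_assoc] using wordCoeff_append_perm hAB hshort hperm [] (by simp; omega)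
  have hBA : B * A - A * B = -vecMulVec w u := by rw [hAB, neg_sub]
  have hc : c = -b * c := calc
    c = trace (A ^ a * B ^ b * (A * B - B * A)) := by
      rw [← hAB, trace_mul_comm, trace_vecMulVec_mul]
    _ = trace (A ^ a * (B ^ b * A - A * B ^ b) * B) := by
      have hcycle : trace (A ^ a * B ^ b * (B * A)) = trace (A ^ a * (A * B ^ b) * B) := by
        rw [← mul_assoc, trace_mul_comm, ← mul_assoc, ← mul_assoc, ← pow_succ', pow_succ,
          mul_assoc _ A]
      rw [mul_sub, mul_sub, sub_mul, trace_sub, trace_sub, hcycle]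
      simp only [mul_assoc]
    _ = -∑ i ∈ Finset.range b, trace (A ^ a * B ^ i * vecMulVec w u * (B ^ (b - 1 - i) * B)) := by
      rw [pow_mul_sub_mul_pow, Finset.mul_sum, Finset.sum_mul, trace_sum, ← Finset.sum_neg_distrib]
      refine Finset.sum_congr rfl fun i _ => ?_
      rw [hBA]
      simp only [mul_neg, neg_mul, trace_neg, mul_assoc]
    _ = -∑ i ∈ Finset.range b, c := by
      refine congrArg _ (Finset.sum_congr rfl fun i hi => ?_)
      rw [trace_mul_cycle, trace_mul_comm, trace_vecMulVec_mul, hrotate i hi]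
    _ = -b * c := by simp
  have hc' : ((b : K) + 1) * c = 0 := by linear_combination hc
  exact (mul_eq_zero.mp hc').resolve_left (Nat.cast_add_one_ne_zero b)

theorem wordCoeff_eq_zero [IsDomain K] [CharZero K] (hAB : vecMulVec w u = A * B - B * A)
    (l : List Bool) : wordCoeff A B u w l = 0 := by
  induction hN : l.length using Nat.strong_induction_on generalizing l with
  | _ N ih =>
    have hshort : ∀ l' : List Bool, l'.length < N → wordCoeff A B u w l' = 0 :=
      fun l' hl' => ih _ hl' l' rfl
    have hsorted :
        l.Perm (List.replicate (l.count true) true ++ List.replicate (l.count false) false) :=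
      (List.perm_replicate_append_replicate (by decide)).2
        ⟨rfl, rfl, fun x _ => by cases x <;> simp⟩
    have hpow := dotProduct_pow_mul_pow_mulVec_eq_zero hAB (a := l.count true) (b := l.count false)
      (by rwa [List.count_true_add_count_false, hN])
    simpa [wordCoeff, hpow] using wordCoeff_append_perm hAB hshort hsorted [] (by simp [hN])

end Words

section StarProjection

variable {𝕜 : Type*} [RCLike 𝕜]

lemma trace_commutator_mul_starProjection {M P : Matrix n n 𝕜} (hP : IsStarProjection P)
    (hMP : P * M * P = M * P) :
    trace ((M * Mᴴ - Mᴴ * M) * P) = trace ((P * M - M * P) * (P * M - M * P)ᴴ) := by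
  have hPP : P * P = P := hP.isIdempotentElem.eq
  have hPH : Pᴴ = P := hP.isSelfAdjoint.star_eq
  have h1 : trace (P * M * Mᴴ * P) = trace (M * Mᴴ * P) := by
    rw [trace_mul_comm _ P, ← mul_assoc, ← mul_assoc, hPP, mul_assoc, trace_mul_comm P]
  have h2 : trace (P * M * P * Mᴴ) = trace (Mᴴ * M * P) := by
    rw [hMP, trace_mul_cycle, mul_assoc]
  have h3 : trace (M * P * Mᴴ * P) = trace (Mᴴ * M * P) := by
    rw [trace_mul_cycle, ← mul_assoc, h2]
  have h4 : trace (M * P * P * Mᴴ) = trace (Mᴴ * M * P) := by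
    rw [mul_assoc M, hPP, trace_mul_cycle, mul_assoc]
  rw [conjTranspose_sub, conjTranspose_mul, conjTranspose_mul, hPH]
  simp only [sub_mul, mul_sub, trace_sub, ← mul_assoc, h1, h2, h3, h4]
  ring

lemma trace_commutator_mul_starProjection_nonneg {M P : Matrix n n 𝕜} (hP : IsStarProjection P)
    (hMP : P * M * P = M * P) : 0 ≤ trace ((M * Mᴴ - Mᴴ * M) * P) := by
  rw [trace_commutator_mul_starProjection hP hMP]
  exact (posSemidef_self_mul_conjTranspose _).trace_nonneg

theorem eq_zero_of_isStarProjection {A B P : Matrix n n 𝕜} {v w : n → 𝕜}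
    (hP : IsStarProjection P) (hA : P * A * P = A * P) (hB : P * B * P = B * P)
    (hw : P *ᵥ w = w) (hv : P *ᵥ v = 0)
    (hreal : vecMulVec v (star v) - vecMulVec w (star w)
      = (A * Aᴴ - Aᴴ * A) + (B * Bᴴ - Bᴴ * B)) :
    w = 0 := by
  have htrace := congrArg (fun X => trace (X * P)) hreal
  rw [sub_mul, trace_sub, trace_vecMulVec_mul, trace_vecMulVec_mul, hv, hw, dotProduct_zero,
    zero_sub, add_mul, trace_add] at htrace
  have hnonneg := add_nonneg (trace_commutator_mul_starProjection_nonneg hP hA)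
    (trace_commutator_mul_starProjection_nonneg hP hB)
  rw [← htrace, neg_nonneg] at hnonneg
  exact dotProduct_star_self_eq_zero.mp (le_antisymm hnonneg (dotProduct_star_self_nonneg w))

end StarProjection

section CyclicSubspace

variable {𝕜 : Type*} [RCLike 𝕜] [DecidableEq n]

noncomputable def starProjectionMatrix (U : Submodule 𝕜 (EuclideanSpace 𝕜 n)) : Matrix n n 𝕜 :=
  (toEuclideanCLM (n := n) (𝕜 := 𝕜)).symm U.starProjection

lemma isStarProjection_starProjectionMatrix (U : Submodule 𝕜 (EuclideanSpace 𝕜 n)) :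
    IsStarProjection (starProjectionMatrix U) :=
  isStarProjection_starProjection.map (toEuclideanCLM (n := n) (𝕜 := 𝕜)).symm

lemma starProjectionMatrix_mulVec (U : Submodule 𝕜 (EuclideanSpace 𝕜 n)) (x : n → 𝕜) :
    starProjectionMatrix U *ᵥ x = (U.starProjection (WithLp.toLp 2 x)).ofLp := by
  rw [starProjectionMatrix, ← ofLp_toEuclideanCLM, StarAlgEquiv.apply_symm_apply]

lemma starProjectionMatrix_mul_mul_eq {U : Submodule 𝕜 (EuclideanSpace 𝕜 n)} {M : Matrix n n 𝕜}
    (hU : U ∈ Module.End.invtSubmodule (toEuclideanCLM (𝕜 := 𝕜) M).toLinearMap) :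
    starProjectionMatrix U * M * starProjectionMatrix U = M * starProjectionMatrix U := by
  rw [← U.range_starProjection] at hU
  have h := (ContinuousLinearMap.IsIdempotentElem.range_mem_invtSubmodule_iff
    isStarProjection_starProjection.isIdempotentElem).mp hU
  have := congrArg (toEuclideanCLM (n := n) (𝕜 := 𝕜)).symm h
  simpa only [starProjectionMatrix, ← ContinuousLinearMap.mul_def, map_mul, mul_assoc,
    StarAlgEquiv.symm_apply_apply] using this

variable (A B : Matrix n n 𝕜) (w : n → 𝕜)

def cyclicSubspace : Submodule 𝕜 (EuclideanSpace 𝕜 n) :=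
  Submodule.span 𝕜 (Set.range fun l => WithLp.toLp 2 (evalWord A B l *ᵥ w))

lemma toLp_evalWord_mulVec_mem_cyclicSubspace (l : List Bool) :
    WithLp.toLp 2 (evalWord A B l *ᵥ w) ∈ cyclicSubspace A B w :=
  Submodule.subset_span ⟨l, rfl⟩

lemma cyclicSubspace_mem_invtSubmodule (b : Bool) :
    cyclicSubspace A B w ∈
      Module.End.invtSubmodule (toEuclideanCLM (𝕜 := 𝕜) (bif b then A else B)).toLinearMap := by
  rw [Module.End.mem_invtSubmodule]
  refine Submodule.span_le.2 ?_
  rintro _ ⟨l, rfl⟩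
  simpa [mulVec_mulVec] using toLp_evalWord_mulVec_mem_cyclicSubspace A B w (b :: l)

variable {A B w}

lemma toLp_mem_orthogonal_cyclicSubspace {v : n → 𝕜}
    (hv : ∀ l, wordCoeff A B (star v) w l = 0) :
    WithLp.toLp 2 v ∈ (cyclicSubspace A B w)ᗮ := by
  have hortho : (𝕜 ∙ WithLp.toLp 2 v) ⟂ cyclicSubspace A B w := by
    refine Submodule.isOrtho_span.2 ?_
    rintro _ rfl _ ⟨l, rfl⟩
    rw [EuclideanSpace.inner_toLp_toLp, dotProduct_comm]
    exact hv l
  exact hortho.le (Submodule.mem_span_singleton_self _)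

end CyclicSubspace

end ADHM

open ADHM

/-- If `v v* - w w* = [A,A*] + [B,B*]` and `w v* = [A,B]`, then `v = 0` and `w = 0`:
the vanishing of the hyperkähler moment map of the ADHM₁,ₖ representation forces the
vector component `Ψ = v + j w` to vanish. -/
theorem adhm_moment_map_zero_implies_vector_zero
    {k : ℕ} (A B : Matrix (Fin k) (Fin k) ℂ) (v w : Fin k → ℂ)
    (h1 : Matrix.vecMulVec v (star v) - Matrix.vecMulVec w (star w)
        = (A * Aᴴ - Aᴴ * A) + (B * Bᴴ - Bᴴ * B))
    (h2 : Matrix.vecMulVec w (star v) = A * B - B * A) :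
    v = 0 ∧ w = 0 := by
  set U := cyclicSubspace A B w
  set P := starProjectionMatrix U
  have hinv (b : Bool) : P * (bif b then A else B) * P = (bif b then A else B) * P :=
    starProjectionMatrix_mul_mul_eq (cyclicSubspace_mem_invtSubmodule A B w b)
  have hPw : P *ᵥ w = w := by
    rw [starProjectionMatrix_mulVec, Submodule.starProjection_eq_self_iff.2]
    simpa using toLp_evalWord_mulVec_mem_cyclicSubspace A B w []
  have hPv : P *ᵥ v = 0 := by
    rw [starProjectionMatrix_mulVec, (Submodule.starProjection_apply_eq_zero_iff _).2
      (toLp_mem_orthogonal_cyclicSubspace (wordCoeff_eq_zero h2)), WithLp.ofLp_zero]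
  have hw : w = 0 := eq_zero_of_isStarProjection (isStarProjection_starProjectionMatrix U)
    (hinv true) (hinv false) hPw hPv h1
  subst hw
  -- `P = 1`, with `A` and `B` replaced by their adjoints, exchanges the roles of `v` and `w`.
  refine ⟨eq_zero_of_isStarProjection (A := Aᴴ) (B := Bᴴ) (IsStarProjection.one _)
    (by simp) (by simp) (one_mulVec v) (one_mulVec 0) ?_, rfl⟩
  rw [conjTranspose_conjTranspose, conjTranspose_conjTranspose, ← neg_sub, h1]
  abel
end

section
/- Let A, B be complex k×k matrices with wv* = [A,B] for vectors v, w ∈ ℂᵏ such that ⟨v, C w⟩ = 0 for every word C in A, B with fewer than k₁+k₂ factors. Then ⟨v, A^{k₁}B^{k₂} w⟩ satisfies ⟨v, A^{k₁}B^{k₂}w⟩ = −k₂·⟨v, A^{k₁}B^{k₂}w⟩, and hence vanishes. -/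
open scoped Matrix
open Finset

private lemma adhm_comm_pow {k : ℕ} (X Y C : Matrix (Fin k) (Fin k) ℂ)
    (h : X * Y - Y * X = C) (n : ℕ) :
    Y ^ n * X = X * Y ^ n - ∑ i ∈ Finset.range n, Y ^ i * C * Y ^ (n - 1 - i) := by
  induction n with
  | zero => simp
  | succ n ih =>
    have hYX : Y * X = X * Y - C := by rw [← h]; noncomm_ring
    have e1 : Y ^ (n + 1) * X = Y * (Y ^ n * X) := by
      rw [pow_succ']; noncomm_ring
    rw [e1, ih, Finset.sum_range_succ' (fun i => Y ^ i * C * Y ^ (n + 1 - 1 - i))]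
    simp only [pow_zero, one_mul, Nat.add_sub_cancel, Nat.sub_zero]
    have e2 : ∀ i ∈ Finset.range n,
        Y ^ (i + 1) * C * Y ^ (n - (i + 1)) = Y * (Y ^ i * C * Y ^ (n - 1 - i)) := by
      intro i hi
      have hn : n - (i + 1) = n - 1 - i := by omega
      rw [hn, pow_succ']
      noncomm_ring
    rw [Finset.sum_congr rfl e2, ← Finset.mul_sum]
    rw [Matrix.mul_sub, ← mul_assoc, hYX, pow_succ']
    noncomm_ring

set_option maxHeartbeats 1000000 in
/-- The key trace computation in the inductive step of the orthogonality lemma for the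
ADHM representation: if `w v* = [A,B]` and `⟨v, C w⟩ = 0` for every word `C` in `A, B`
with fewer than `k₁ + k₂` factors, then
`⟨v, A^{k₁} B^{k₂} w⟩ = -k₂ ⟨v, A^{k₁} B^{k₂} w⟩`, and hence this quantity vanishes. -/
theorem adhm_orthogonality_inductive_step
    {k : ℕ} (k₁ k₂ : ℕ) (A B : Matrix (Fin k) (Fin k) ℂ) (v w : Fin k → ℂ)
    (houter : Matrix.vecMulVec w (star v) = A * B - B * A)
    (hind : ∀ l : List (Matrix (Fin k) (Fin k) ℂ),
      (∀ M ∈ l, M = A ∨ M = B) → l.length < k₁ + k₂ →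
      star v ⬝ᵥ (l.prod *ᵥ w) = 0) :
    star v ⬝ᵥ ((A ^ k₁ * B ^ k₂) *ᵥ w)
        = -(k₂ : ℂ) * (star v ⬝ᵥ ((A ^ k₁ * B ^ k₂) *ᵥ w)) ∧
      star v ⬝ᵥ ((A ^ k₁ * B ^ k₂) *ᵥ w) = 0 := by
  classical
  set sv := star v with hsv
  set W : Matrix (Fin k) (Fin k) ℂ := Matrix.vecMulVec w sv with hW
  set f : Matrix (Fin k) (Fin k) ℂ → ℂ := fun M => sv ⬝ᵥ (M *ᵥ w) with hf
  -- W acting on a vector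
  have hWvec : ∀ x : Fin k → ℂ, W *ᵥ x = (sv ⬝ᵥ x) • w := by
    intro x
    funext i
    simp only [hW, Matrix.mulVec, Matrix.vecMulVec_apply, dotProduct, Pi.smul_apply,
      Finset.sum_mul, smul_eq_mul, Finset.mul_sum]
    exact Finset.sum_congr rfl (fun j _ => by ring)
  -- sandwich lemma
  have hsand : ∀ M N : Matrix (Fin k) (Fin k) ℂ, f (M * W * N) = f M * f N := by
    intro M N
    simp only [hf]
    rw [← Matrix.mulVec_mulVec, ← Matrix.mulVec_mulVec, hWvec, Matrix.mulVec_smul,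
      dotProduct_smul, smul_eq_mul]
    ring
  -- f as a trace
  have hftr : ∀ M : Matrix (Fin k) (Fin k) ℂ, f M = Matrix.trace (M * W) := by
    intro M
    simp only [hf, hW, Matrix.trace, Matrix.diag, Matrix.mul_apply, Matrix.vecMulVec_apply,
      dotProduct, Matrix.mulVec, Finset.mul_sum]
    exact Finset.sum_congr rfl (fun i _ => Finset.sum_congr rfl (fun j _ => by ring))
  -- vanishing of short words B^a * A^b
  have hword : ∀ a b : ℕ, a + b < k₁ + k₂ → f (B ^ a * A ^ b) = 0 := by
    intro a b hab
    have := hind (List.replicate a B ++ List.replicate b A)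
      (by intro M hM
          rcases List.mem_append.mp hM with h | h
          · exact Or.inr (List.eq_of_mem_replicate h)
          · exact Or.inl (List.eq_of_mem_replicate h))
      (by simpa using hab)
    simpa [List.prod_append, List.prod_replicate, hf] using this
  -- moving powers of B across A^{k₁}
  have hmoveB : B * A ^ k₁ = A ^ k₁ * B - ∑ i ∈ Finset.range k₁, A ^ i * W * A ^ (k₁ - 1 - i) := by
    have h := adhm_comm_pow B A (-W) (by rw [houter]; noncomm_ring) k₁
    have h2 : A ^ k₁ * B = B * A ^ k₁ + ∑ i ∈ Finset.range k₁, A ^ i * W * A ^ (k₁ - 1 - i) := by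
      rw [h]
      simp [mul_neg, neg_mul, sub_neg_eq_add, Finset.sum_neg_distrib]
    rw [h2]
    noncomm_ring
  -- linearity of f
  have hfsub : ∀ M N : Matrix (Fin k) (Fin k) ℂ, f (M - N) = f M - f N := by
    intro M N
    simp only [hftr, Matrix.sub_mul, Matrix.trace_sub]
  have hfsum : ∀ (s : Finset ℕ) (g : ℕ → Matrix (Fin k) (Fin k) ℂ),
      f (∑ i ∈ s, g i) = ∑ i ∈ s, f (g i) := by
    intro s g
    simp only [hftr, Finset.sum_mul, Matrix.trace_sum]
  -- key invariance: sliding powers of B to the left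
  have hL4 : ∀ j : ℕ, j ≤ k₂ →
      f (B ^ j * A ^ k₁ * B ^ (k₂ - j)) = f (A ^ k₁ * B ^ k₂) := by
    intro j
    induction j with
    | zero => intro _; simp
    | succ j ih =>
      intro hj
      have ihj := ih (by omega)
      have eB : B * B ^ (k₂ - (j + 1)) = B ^ (k₂ - j) := by
        rw [← pow_succ']
        congr 1
        omega
      have key : B ^ (j + 1) * A ^ k₁ * B ^ (k₂ - (j + 1))
          = B ^ j * A ^ k₁ * B ^ (k₂ - j)
            - ∑ i ∈ Finset.range k₁,
                (B ^ j * A ^ i) * W * (A ^ (k₁ - 1 - i) * B ^ (k₂ - (j + 1))) := by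
        have e0 : B ^ (j + 1) * A ^ k₁ * B ^ (k₂ - (j + 1))
            = B ^ j * (B * A ^ k₁) * B ^ (k₂ - (j + 1)) := by
          rw [pow_succ]
          noncomm_ring
        rw [e0, hmoveB, Matrix.mul_sub, Matrix.sub_mul]
        congr 1
        · rw [← eB]
          noncomm_ring
        · rw [Finset.mul_sum, Finset.sum_mul]
          exact Finset.sum_congr rfl fun i _ => by noncomm_ring
      rw [key, hfsub, hfsum, ← ihj]
      have hz : ∀ i ∈ Finset.range k₁,
          f ((B ^ j * A ^ i) * W * (A ^ (k₁ - 1 - i) * B ^ (k₂ - (j + 1)))) = 0 := by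
        intro i hi
        rw [hsand]
        have : f (B ^ j * A ^ i) = 0 := hword j i (by
          have := Finset.mem_range.mp hi
          omega)
        rw [this, zero_mul]
      rw [Finset.sum_congr rfl hz, Finset.sum_const, smul_zero, sub_zero]
  -- the trace computation
  have hmoveBk : B ^ k₂ * A
      = A * B ^ k₂ - ∑ i ∈ Finset.range k₂, B ^ i * W * B ^ (k₂ - 1 - i) :=
    adhm_comm_pow A B W houter.symm k₂
  have hWAB : A ^ k₁ * B ^ k₂ * W
      = A ^ k₁ * B ^ k₂ * (A * B) - A ^ k₁ * B ^ k₂ * (B * A) := by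
    rw [houter]
    noncomm_ring
  have split : f (A ^ k₁ * B ^ k₂)
      = Matrix.trace (A ^ k₁ * B ^ k₂ * (A * B))
        - Matrix.trace (A ^ k₁ * B ^ k₂ * (B * A)) := by
    rw [hftr, hWAB, Matrix.trace_sub]
  have e1 : Matrix.trace (A ^ k₁ * B ^ k₂ * (B * A))
      = Matrix.trace (A ^ (k₁ + 1) * B ^ (k₂ + 1)) := by
    have h0 : A ^ k₁ * B ^ k₂ * (B * A) = (A ^ k₁ * B ^ k₂ * B) * A := by
      noncomm_ring
    rw [h0, Matrix.trace_mul_comm]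
    congr 1
    rw [pow_succ', pow_succ]
    noncomm_ring
  have e2 : A ^ k₁ * B ^ k₂ * (A * B)
      = A ^ (k₁ + 1) * B ^ (k₂ + 1)
        - ∑ i ∈ Finset.range k₂, (A ^ k₁ * B ^ i) * W * (B ^ (k₂ - 1 - i) * B) := by
    have h0 : A ^ k₁ * B ^ k₂ * (A * B) = A ^ k₁ * (B ^ k₂ * A) * B := by
      noncomm_ring
    rw [h0, hmoveBk, Matrix.mul_sub, Matrix.sub_mul]
    congr 1
    · rw [pow_succ, pow_succ]
      noncomm_ring
    · rw [Finset.mul_sum, Finset.sum_mul]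
      exact Finset.sum_congr rfl fun i _ => by noncomm_ring
  have each : ∀ i ∈ Finset.range k₂,
      Matrix.trace ((A ^ k₁ * B ^ i) * W * (B ^ (k₂ - 1 - i) * B)) = f (A ^ k₁ * B ^ k₂) := by
    intro i hi
    have hik : i < k₂ := Finset.mem_range.mp hi
    have hBe : B ^ (k₂ - 1 - i) * B = B ^ (k₂ - i) := by
      rw [← pow_succ]
      congr 1
      omega
    rw [hBe, Matrix.trace_mul_comm]
    have h4 := hL4 (k₂ - i) (by omega)
    have hii : k₂ - (k₂ - i) = i := by omega
    rw [hii, hftr] at h4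
    rw [← h4]
    congr 1
    noncomm_ring
  have hmain : f (A ^ k₁ * B ^ k₂) = -(k₂ : ℂ) * f (A ^ k₁ * B ^ k₂) := by
    calc f (A ^ k₁ * B ^ k₂)
        = Matrix.trace (A ^ k₁ * B ^ k₂ * (A * B))
            - Matrix.trace (A ^ k₁ * B ^ k₂ * (B * A)) := split
      _ = (Matrix.trace (A ^ (k₁ + 1) * B ^ (k₂ + 1))
            - ∑ i ∈ Finset.range k₂,
                Matrix.trace ((A ^ k₁ * B ^ i) * W * (B ^ (k₂ - 1 - i) * B)))
            - Matrix.trace (A ^ (k₁ + 1) * B ^ (k₂ + 1)) := by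
          rw [e2, Matrix.trace_sub, Matrix.trace_sum, e1]
      _ = - ∑ i ∈ Finset.range k₂, f (A ^ k₁ * B ^ k₂) := by
          rw [Finset.sum_congr rfl each]
          ring
      _ = -(k₂ : ℂ) * f (A ^ k₁ * B ^ k₂) := by
          rw [Finset.sum_const, Finset.card_range, nsmul_eq_mul]
          ring
  have hzero : f (A ^ k₁ * B ^ k₂) = 0 := by
    have h1 : (1 + (k₂ : ℂ)) * f (A ^ k₁ * B ^ k₂) = 0 := by
      linear_combination hmain
    have h2 : (1 + (k₂ : ℂ)) ≠ 0 := by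
      have : ((1 + k₂ : ℕ) : ℂ) ≠ 0 := Nat.cast_ne_zero.mpr (by omega)
      simpa using this
    exact (mul_eq_zero.mp h1).resolve_left h2
  exact ⟨hmain, hzero⟩
end

section
/- The hyperkähler quotient of ℍ⊗𝔲(k) by the adjoint action of U(k) at level zero is Sym^k ℍ: the set of ξ ∈ ℍ⊗𝔲(k) with all components pairwise commuting, modulo simultaneous conjugation by U(k), is in natural bijection with the k-fold symmetric product ℍᵏ/S_k, via the joint spectrum map ξ ↦ {v₁, ..., v_k}. -/
open scoped Matrix

noncomputable section

/-- The zero locus `μ⁻¹(0)` of the hyperkähler moment map for the adjoint action of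
`U(k)` on `ℍ ⊗ 𝔲(k)`: quadruples of skew-Hermitian matrices whose components pairwise
commute. -/
def ADHMAdjointZeroLocus (k : ℕ) : Type :=
  {ξ : Fin 4 → Matrix (Fin k) (Fin k) ℂ //
    (∀ α, (ξ α)ᴴ = -ξ α) ∧ ∀ α β, ξ α * ξ β = ξ β * ξ α}

/-- Simultaneous conjugation by `U(k)`. -/
def unitaryConjRel (k : ℕ) (ξ η : ADHMAdjointZeroLocus k) : Prop :=
  ∃ U : Matrix.unitaryGroup (Fin k) ℂ, ∀ α,
    η.val α = (U : Matrix (Fin k) (Fin k) ℂ) * ξ.val α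
      * star (U : Matrix (Fin k) (Fin k) ℂ)

/-- The permutation action of `S_k` on `ℍᵏ`; the quotient is `Sym^k ℍ = ℍᵏ/S_k`. -/
def permRel (k : ℕ) (v w : Fin k → Quaternion ℝ) : Prop :=
  ∃ σ : Equiv.Perm (Fin k), w = v ∘ σ

/-! Write `ξ_α = i A_α`: the `A_α` are pairwise commuting Hermitian matrices, so the spectral
theorem gives an orthonormal basis of joint eigenvectors, i.e. `ξ` is unitarily conjugate to a
diagonal quadruple `diag(i t_α)`. The multiset of joint eigenvalue vectors `t_i ∈ ℝ⁴ ≅ ℍ` does not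
depend on the basis, because the multiplicity of each of them is the dimension of the
corresponding joint eigenspace. Unitary conjugation moves eigenbases without changing eigenvalues,
and diagonal quadruples give the inverse map `ℍᵏ/S_k → μ⁻¹(0)/U(k)`. -/

open Module Module.End Submodule
open scoped Function

section JointEigenbasis

variable {K V ι κ : Type*} [Field K] [AddCommGroup V] [Module K V] {T : ι → Module.End K V}
  {b : Basis κ K V} {χ : κ → ι → K}

theorem Module.Basis.repr_apply_eq_mul_of_apply_eq_smul (hb : ∀ a i, T i (b a) = χ a i • b a)
    (i : ι) (x : V) (a : κ) : b.repr (T i x) a = χ a i * b.repr x a := by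
  have : (b.coord a).comp (T i) = χ a i • b.coord a :=
    b.ext fun c => by
      by_cases h : c = a
      · subst h; simp [hb]
      · simp [hb, h]
  exact LinearMap.congr_fun this x

theorem Module.Basis.iInf_eigenspace_eq_span_of_apply_eq_smul
    (hb : ∀ a i, T i (b a) = χ a i • b a) (μ : ι → K) :
    ⨅ i, eigenspace (T i) (μ i) = span K (b '' {a | χ a = μ}) := by
  refine le_antisymm (fun x hx => ?_) (span_le.mpr ?_)
  · rw [b.mem_span_image]
    intro a ha
    rw [Finset.mem_coe, Finsupp.mem_support_iff] at ha
    funext i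
    have hxi : T i x = μ i • x := mem_eigenspace_iff.mp ((mem_iInf _).mp hx i)
    have := b.repr_apply_eq_mul_of_apply_eq_smul hb i x a
    rw [hxi, map_smul, Finsupp.smul_apply, smul_eq_mul] at this
    exact (mul_right_cancel₀ ha this).symm
  · rintro _ ⟨a, rfl : χ a = μ, rfl⟩
    exact (mem_iInf _).mpr fun i => mem_eigenspace_iff.mpr (hb a i)

theorem Module.Basis.finrank_iInf_eigenspace_of_apply_eq_smul [Finite κ]
    (hb : ∀ a i, T i (b a) = χ a i • b a) (μ : ι → K) :
    finrank K ↥(⨅ i, eigenspace (T i) (μ i)) = Nat.card {a // χ a = μ} := by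
  classical
  have := Fintype.ofFinite κ
  rw [b.iInf_eigenspace_eq_span_of_apply_eq_smul hb, Set.image_eq_range, Nat.card_eq_fintype_card]
  exact finrank_span_eq_card (b.linearIndependent.comp _ Subtype.val_injective)

theorem Module.Basis.exists_perm_of_apply_eq_smul [Finite κ] {b' : Basis κ K V} {χ' : κ → ι → K}
    (hb : ∀ a i, T i (b a) = χ a i • b a) (hb' : ∀ a i, T i (b' a) = χ' a i • b' a) :
    ∃ σ : Equiv.Perm κ, ∀ a, χ' a = χ (σ a) := by
  have hfiber (μ : ι → K) : Nonempty ({a // χ' a = μ} ≃ {a // χ a = μ}) := by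
    rw [← Finite.card_eq, ← b'.finrank_iInf_eigenspace_of_apply_eq_smul hb',
      ← b.finrank_iInf_eigenspace_of_apply_eq_smul hb]
  let e μ := (hfiber μ).some
  exact ⟨Equiv.ofFiberEquiv e, fun a => (Equiv.ofFiberEquiv_map e a).symm⟩

end JointEigenbasis

theorem LinearMap.IsSymmetric.exists_orthonormalBasis_apply_eq_smul {𝕜 E ι : Type*} [RCLike 𝕜]
    [NormedAddCommGroup E] [InnerProductSpace 𝕜 E] [FiniteDimensional 𝕜 E]
    {T : ι → Module.End 𝕜 E} (hT : ∀ i, (T i).IsSymmetric) (hC : Pairwise (Commute on T))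
    {n : ℕ} (hn : finrank 𝕜 E = n) :
    ∃ (b : OrthonormalBasis (Fin n) 𝕜 E) (χ : Fin n → ι → ℝ),
      ∀ a i, T i (b a) = (χ a i : 𝕜) • b a := by
  classical
  let V (μ : ι → 𝕜) := ⨅ i, eigenspace (T i) (μ i)
  have hV := directSum_isInternal_of_pairwise_commute hT hC
  have : Fintype {μ // V μ ≠ ⊥} := hV.submodule_iSupIndep.fintypeNeBotOfFiniteDimensional
  have hV' : DirectSum.IsInternal fun μ : {μ // V μ ≠ ⊥} => V μ :=
    DirectSum.isInternal_ne_bot_iff.mpr hV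
  have hO := (orthogonalFamily_iInf_eigenspaces hT).comp
    (Subtype.val_injective (p := fun μ => V μ ≠ ⊥))
  let μ (a : Fin n) : ι → 𝕜 := (hV'.subordinateOrthonormalBasisIndex hn a hO).1
  let b := hV'.subordinateOrthonormalBasis hn hO
  have hb (a : Fin n) (i : ι) : T i (b a) = μ a i • b a :=
    mem_eigenspace_iff.mp ((mem_iInf _).mp (hV'.subordinateOrthonormalBasis_subordinate hn a hO) i)
  have hμ (a : Fin n) (i : ι) : ((RCLike.re (μ a i) : ℝ) : 𝕜) = μ a i :=
    RCLike.conj_eq_iff_re.mp <| (hT i).conj_eigenvalue_eq_self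
      (hasEigenvalue_of_hasEigenvector ⟨mem_eigenspace_iff.mpr (hb a i), b.orthonormal.ne_zero a⟩)
  exact ⟨b, fun a i => RCLike.re (μ a i), fun a i => by rw [hμ, hb]⟩

theorem Matrix.exists_orthonormal_eigenvectors_of_commute {𝕜 ι : Type*} [RCLike 𝕜] {n : ℕ}
    {A : ι → Matrix (Fin n) (Fin n) 𝕜} (hA : ∀ i, (A i).IsHermitian)
    (hC : ∀ i j, Commute (A i) (A j)) :
    ∃ (e : Fin n → Fin n → 𝕜) (χ : Fin n → ι → ℝ),
      (∀ a b, star (e a) ⬝ᵥ e b = if a = b then 1 else 0) ∧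
        ∀ i a, A i *ᵥ e a = (χ a i : 𝕜) • e a := by
  obtain ⟨b, χ, hb⟩ := LinearMap.IsSymmetric.exists_orthonormalBasis_apply_eq_smul
    (T := fun i => toEuclideanLin (A i)) (fun i => isSymmetric_toEuclideanLin_iff.mpr (hA i))
    (fun i j _ => (hC i j).map (toLpLinAlgEquiv 2 (R := 𝕜) (n := Fin n)))
    finrank_euclideanSpace_fin
  refine ⟨fun a => b a, χ, fun a a' => ?_, fun i a => congrArg WithLp.ofLp (hb a i)⟩
  rw [← orthonormal_iff_ite.mp b.orthonormal a a', EuclideanSpace.inner_eq_star_dotProduct,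
    dotProduct_comm]

namespace ADHMAdjointZeroLocus

variable {k : ℕ}

def IsJointEigenbasis (ξ : ADHMAdjointZeroLocus k) (e : Fin k → Fin k → ℂ)
    (t : Fin k → Fin 4 → ℝ) : Prop :=
  (∀ i j, star (e i) ⬝ᵥ e j = if i = j then 1 else 0) ∧
    ∀ α i, ξ.val α *ᵥ e i = ((t i α : ℂ) * Complex.I) • e i

theorem exists_isJointEigenbasis (ξ : ADHMAdjointZeroLocus k) :
    ∃ e t, ξ.IsJointEigenbasis e t := by
  have hξ (α : Fin 4) : ξ.val α = Complex.I • (-Complex.I) • ξ.val α := by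
    rw [smul_smul, mul_neg, Complex.I_mul_I, neg_neg, one_smul]
  obtain ⟨e, t, he, ht⟩ := Matrix.exists_orthonormal_eigenvectors_of_commute
    (A := fun α => (-Complex.I) • ξ.val α)
    (fun α => by simp [Matrix.IsHermitian, Matrix.conjTranspose_smul, ξ.2.1 α])
    (fun α β => by simp [Commute, SemiconjBy, ξ.2.2 α β])
  refine ⟨e, t, he, fun α i => ?_⟩
  rw [hξ α, Matrix.smul_mulVec, ht, smul_smul, mul_comm]
  rfl

variable {ξ η : ADHMAdjointZeroLocus k} {e : Fin k → Fin k → ℂ} {t : Fin k → Fin 4 → ℝ}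

theorem IsJointEigenbasis.transpose_mem_unitaryGroup (h : ξ.IsJointEigenbasis e t) :
    (Matrix.of e)ᵀ ∈ Matrix.unitaryGroup (Fin k) ℂ := by
  rw [Matrix.mem_unitaryGroup_iff']
  ext i j
  rw [Matrix.one_apply, ← h.1 i j]
  simp [Matrix.mul_apply, dotProduct]

theorem IsJointEigenbasis.exists_perm {e' : Fin k → Fin k → ℂ} {t' : Fin k → Fin 4 → ℝ}
    (h : ξ.IsJointEigenbasis e t) (h' : ξ.IsJointEigenbasis e' t') :
    ∃ σ : Equiv.Perm (Fin k), ∀ i, t' i = t (σ i) := by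
  have basis {e : Fin k → Fin k → ℂ} {t} (h : ξ.IsJointEigenbasis e t) :
      ∃ b : Basis (Fin k) ℂ (Fin k → ℂ), ⇑b = e :=
    ⟨basisOfLinearIndependentOfCardEqFinrank' e
      (Matrix.linearIndependent_cols_iff_isUnit.mpr
        (Unitary.isUnit_coe (U := ⟨_, h.transpose_mem_unitaryGroup⟩))) (by simp),
      coe_basisOfLinearIndependentOfCardEqFinrank' _ _ _⟩
  obtain ⟨b, rfl⟩ := basis h
  obtain ⟨b', rfl⟩ := basis h'
  obtain ⟨σ, hσ⟩ := b.exists_perm_of_apply_eq_smul (T := fun α => (ξ.val α).mulVecLin)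
    (χ := fun i α => (t i α : ℂ) * Complex.I) (χ' := fun i α => (t' i α : ℂ) * Complex.I)
    (fun i α => h.2 α i) (fun i α => h'.2 α i)
  refine ⟨σ, fun i => funext fun α => ?_⟩
  exact_mod_cast mul_right_cancel₀ Complex.I_ne_zero (congrFun (hσ i) α)

theorem IsJointEigenbasis.comp_perm (h : ξ.IsJointEigenbasis e t) (σ : Equiv.Perm (Fin k)) :
    ξ.IsJointEigenbasis (e ∘ σ) (t ∘ σ) :=
  ⟨fun i j => by simp [h.1, σ.injective.eq_iff], fun α i => h.2 α (σ i)⟩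

theorem IsJointEigenbasis.exists_of_unitaryConjRel (h : ξ.IsJointEigenbasis e t)
    (hξη : unitaryConjRel k ξ η) : ∃ e', η.IsJointEigenbasis e' t := by
  obtain ⟨⟨U, hU⟩, hη⟩ := hξη
  have hUU : star U * U = 1 := Matrix.mem_unitaryGroup_iff'.mp hU
  refine ⟨fun i => U *ᵥ e i, fun i j => ?_, fun α i => ?_⟩
  · rw [Matrix.star_mulVec, ← Matrix.dotProduct_mulVec, Matrix.mulVec_mulVec,
      ← Matrix.star_eq_conjTranspose, hUU, Matrix.one_mulVec, h.1]
  · rw [hη α, Matrix.mulVec_mulVec, Matrix.mul_assoc, Matrix.mul_assoc, hUU, Matrix.mul_one,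
      ← Matrix.mulVec_mulVec, h.2, Matrix.mulVec_smul]

def diagonal (t : Fin k → Fin 4 → ℝ) : ADHMAdjointZeroLocus k :=
  ⟨fun α => Matrix.diagonal fun i => (t i α : ℂ) * Complex.I,
    fun α => by simp [Matrix.diagonal_conjTranspose, Pi.star_def, Matrix.diagonal_neg],
    fun α β => by simp [Matrix.diagonal_mul_diagonal, mul_comm]⟩

theorem isJointEigenbasis_diagonal (t : Fin k → Fin 4 → ℝ) :
    (diagonal t).IsJointEigenbasis (fun i => Pi.single i 1) t :=
  ⟨fun i j => by simp [Pi.single_apply, eq_comm],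
    fun α i => by ext j; simp [diagonal, Pi.single_apply]⟩

theorem IsJointEigenbasis.unitaryConjRel_diagonal (h : ξ.IsJointEigenbasis e t) :
    unitaryConjRel k (diagonal t) ξ := by
  set U := (Matrix.of e)ᵀ
  have hU : U * star U = 1 := Matrix.mem_unitaryGroup_iff.mp h.transpose_mem_unitaryGroup
  refine ⟨⟨U, h.transpose_mem_unitaryGroup⟩, fun α => ?_⟩
  have hcols : ξ.val α * U = U * (diagonal t).val α := by
    ext i j
    rw [diagonal, Matrix.mul_diagonal]
    exact (congrFun (h.2 α j) i).trans (mul_comm _ _)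
  calc ξ.val α = ξ.val α * U * star U := by rw [Matrix.mul_assoc, hU, Matrix.mul_one]
    _ = U * (diagonal t).val α * star U := by rw [hcols]

theorem IsJointEigenbasis.quot_mk_eq {e' : Fin k → Fin k → ℂ} {t' : Fin k → Fin 4 → ℝ}
    (h : ξ.IsJointEigenbasis e t) (h' : ξ.IsJointEigenbasis e' t') :
    Quot.mk (permRel k) ((Quaternion.equivTuple ℝ).symm ∘ t)
      = Quot.mk _ ((Quaternion.equivTuple ℝ).symm ∘ t') := by
  obtain ⟨σ, hσ⟩ := h.exists_perm h'
  exact Quot.sound ⟨σ, funext fun i => congrArg _ (hσ i)⟩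

def jointSpectrum (ξ : ADHMAdjointZeroLocus k) : Quot (permRel k) :=
  Quot.mk _ ((Quaternion.equivTuple ℝ).symm ∘ (exists_isJointEigenbasis ξ).choose_spec.choose)

theorem IsJointEigenbasis.jointSpectrum_eq (h : ξ.IsJointEigenbasis e t) :
    ξ.jointSpectrum = Quot.mk _ ((Quaternion.equivTuple ℝ).symm ∘ t) :=
  (exists_isJointEigenbasis ξ).choose_spec.choose_spec.quot_mk_eq h

theorem jointSpectrum_eq_of_unitaryConjRel (hξη : unitaryConjRel k ξ η) :
    ξ.jointSpectrum = η.jointSpectrum := by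
  obtain ⟨e, t, h⟩ := exists_isJointEigenbasis ξ
  obtain ⟨e', h'⟩ := h.exists_of_unitaryConjRel hξη
  rw [h.jointSpectrum_eq, h'.jointSpectrum_eq]

theorem jointSpectrum_diagonal (v : Fin k → Quaternion ℝ) :
    (diagonal (Quaternion.equivTuple ℝ ∘ v)).jointSpectrum = Quot.mk _ v := by
  rw [(isJointEigenbasis_diagonal _).jointSpectrum_eq, ← Function.comp_assoc,
    Equiv.symm_comp_self, Function.id_comp]

def ofJointSpectrum : Quot (permRel k) → Quot (unitaryConjRel k) :=
  Quot.lift (fun v => Quot.mk _ (diagonal (Quaternion.equivTuple ℝ ∘ v))) <| by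
    rintro v _ ⟨σ, rfl⟩
    exact (Quot.sound ((isJointEigenbasis_diagonal _).comp_perm σ).unitaryConjRel_diagonal).symm

theorem ofJointSpectrum_mk (v : Fin k → Quaternion ℝ) :
    ofJointSpectrum (Quot.mk _ v) = Quot.mk _ (diagonal (Quaternion.equivTuple ℝ ∘ v)) :=
  rfl

theorem ofJointSpectrum_jointSpectrum (ξ : ADHMAdjointZeroLocus k) :
    ofJointSpectrum ξ.jointSpectrum = Quot.mk _ ξ := by
  obtain ⟨e, t, h⟩ := exists_isJointEigenbasis ξ
  rw [h.jointSpectrum_eq, ofJointSpectrum_mk, ← Function.comp_assoc,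
    Equiv.self_comp_symm, Function.id_comp]
  exact Quot.sound h.unitaryConjRel_diagonal

variable (k) in
def jointSpectrumEquiv : Quot (unitaryConjRel k) ≃ Quot (permRel k) where
  toFun := Quot.lift jointSpectrum fun _ _ => jointSpectrum_eq_of_unitaryConjRel
  invFun := ofJointSpectrum
  left_inv := Quot.ind ofJointSpectrum_jointSpectrum
  right_inv := Quot.ind jointSpectrum_diagonal

end ADHMAdjointZeroLocus

/-- The hyperkähler quotient of `ℍ ⊗ 𝔲(k)` by the adjoint action of `U(k)` at level
zero is `Sym^k ℍ`: the set of `ξ` with pairwise commuting components, modulo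
simultaneous conjugation by `U(k)`, is in natural bijection with `ℍᵏ/S_k` via the
joint spectrum map `ξ ↦ {v₁,…,v_k}`.  (If `e` is an orthonormal eigenbasis with
`ξ_α e_i = (i t_{i,α}) e_i`, then `ξ` is sent to the multiset of quaternions
`v_i = t_{i,0} + t_{i,1} i + t_{i,2} j + t_{i,3} k`.) -/
theorem hyperkahler_quotient_adjoint_action_is_sym_k_H (k : ℕ) :
    ∃ F : Quot (unitaryConjRel k) ≃ Quot (permRel k),
      ∀ (ξ : ADHMAdjointZeroLocus k) (e : Fin k → (Fin k → ℂ)) (t : Fin k → Fin 4 → ℝ),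
        (∀ i j, star (e i) ⬝ᵥ e j = if i = j then 1 else 0) →
        (∀ α i, (ξ.val α) *ᵥ e i = (((t i α : ℝ) : ℂ) * Complex.I) • e i) →
        F (Quot.mk _ ξ)
          = Quot.mk _ (fun i => (⟨t i 0, t i 1, t i 2, t i 3⟩ : Quaternion ℝ)) := by
  exact ⟨ADHMAdjointZeroLocus.jointSpectrumEquiv k,
    fun _ _ _ he ht => ADHMAdjointZeroLocus.IsJointEigenbasis.jointSpectrum_eq ⟨he, ht⟩⟩
end
end
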